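/- Let α = [0;1+d₁,\overline{d₂,…,dₙ}] be a Sturm number of type (i) (dₙ ≥ d₁ ≥ 1), with standard sequence (sₖ) and associated standard morphism σ. Then σ(sₖ) = s_{k+(n−1)} for every k ∈ ℕ, and consequently σ^m(sₖ) = s_{k+m(n−1)} for every fixed k ∈ ℕ and every m ≥ 0. -/

import Mathlib

/-- The two-letter alphabet 𝒜 = {a, b}. -/
inductive AB : Type
  | a : AB
  | b : AB
deriving DecidableEq, Repr

/-- Apply a morphism (determined by its images on the letters) to a finite word. -/
def applyM (g : AB → List AB) (w : List AB) : List AB := w.flatMap g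

/-- The exchange morphism E : a ↦ b, b ↦ a. -/
def Em : AB → List AB
  | AB.a => [AB.b]
  | AB.b => [AB.a]

/-- The morphism φ : a ↦ ab, b ↦ a. -/
def phim : AB → List AB
  | AB.a => [AB.a, AB.b]
  | AB.b => [AB.a]

/-- Composition of morphisms: `compM g h` applies `h` first, then `g`. -/
def compM (g h : AB → List AB) : AB → List AB := fun c => applyM g (h c)

/-- Powers of a morphism. -/
def mpow (g : AB → List AB) : ℕ → AB → List AB
  | 0 => fun c => [c]
  | n + 1 => compM g (mpow g n)

/-- A morphism is standard iff it is a composition of E and φ (in any number and order). -/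
inductive IsStandard : (AB → List AB) → Prop
  | id : IsStandard (fun c => [c])
  | compE {ψ : AB → List AB} : IsStandard ψ → IsStandard (compM ψ Em)
  | compPhi {ψ : AB → List AB} : IsStandard ψ → IsStandard (compM ψ phim)

/-- `IsRightConj ψ ξ k` : ξ is the k-th right conjugate of ψ, i.e. there is a word u
of length k with ψ(w)u = uξ(w) for all finite words w. -/
def IsRightConj (ψ ξ : AB → List AB) (k : ℕ) : Prop :=
  ∃ u : List AB, u.length = k ∧ ∀ w : List AB, applyM ψ w ++ u = u ++ applyM ξ w

/-- w^k (power of a finite word under concatenation). -/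
def lpow (w : List AB) : ℕ → List AB
  | 0 => []
  | k + 1 => w ++ lpow w k

/-- Standard sequence associated with a directive sequence (d₁, d₂, …) (here `d`
is indexed so that `d i` is dᵢ for i ≥ 1): `sseq d 0 = s₋₁ = b`, `sseq d (n+1) = sₙ`,
with s₀ = a and sₙ = sₙ₋₁^{dₙ} sₙ₋₂. -/
def sseq (d : ℕ → ℕ) : ℕ → List AB
  | 0 => [AB.b]
  | 1 => [AB.a]
  | n + 2 => lpow (sseq d (n + 1)) (d (n + 1)) ++ sseq d n

/-- Convergent denominators: `qseq d n` = qₙ = |sₙ| (q₀ = 1, q₁ = 1 + d₁,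
qₙ = dₙqₙ₋₁ + qₙ₋₂). -/
def qseq (d : ℕ → ℕ) : ℕ → ℕ
  | 0 => 1
  | 1 => 1 + d 1
  | n + 2 => d (n + 2) * qseq d (n + 1) + qseq d n

/-- `PrefInf u x` : the finite word u is a prefix of the infinite word x. -/
def PrefInf (u : List AB) (x : ℕ → AB) : Prop :=
  ∀ i, i < u.length → u.getD i AB.a = x i

/-- Image of an infinite word under a (non-erasing) morphism, letter by letter. -/
def applyInf (g : AB → List AB) (x : ℕ → AB) : ℕ → AB :=
  fun i => (applyM g ((List.range (i + 1)).map x)).getD i AB.a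

/-- `IsProdInf u x` : the infinite word x is the infinite product u 0 · u 1 · u 2 ⋯,
i.e. every finite partial product is a prefix of x. -/
def IsProdInf (u : ℕ → List AB) (x : ℕ → AB) : Prop :=
  ∀ n, PrefInf (((List.range n).map u).flatten) x

/-- Adjoining singular words: `vword d k` is the adjoining singular word v_{k-1}
(so `vword d 0 = v₋₁`), where vₙ = a·sₙ₊₁^{d_{n+2}−1}sₙ·b⁻¹ for n odd and
vₙ = b·sₙ₊₁^{d_{n+2}−1}sₙ·a⁻¹ for n even. -/
def vword (d : ℕ → ℕ) (k : ℕ) : List AB :=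
  (if k % 2 = 0 then AB.a else AB.b) ::
    (lpow (sseq d (k + 1)) (d (k + 1) - 1) ++ sseq d k).dropLast

/-- Singular words: `wword d k` is the singular word w_{k-2}
(w₋₂ = ε, w₋₁ = a, w₀ = b, and wₙ = a·sₙ·b⁻¹ for n ≥ 1 odd, wₙ = b·sₙ·a⁻¹ for n even). -/
def wword (d : ℕ → ℕ) : ℕ → List AB
  | 0 => []
  | 1 => [AB.a]
  | 2 => [AB.b]
  | k + 3 =>
      (if (k + 1) % 2 = 1 then AB.a else AB.b) :: (sseq d (k + 2)).dropLast

/-- The standard morphism σ associated with a type (i) Sturm number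
α = [0;1+d₁,\overline{d₂,…,dₙ}] : σ(a) = sₙ₋₁, σ(b) = sₙ₋₁^{dₙ−d₁} sₙ₋₂. -/
def sigmaGen (d : ℕ → ℕ) (n : ℕ) : AB → List AB
  | AB.a => sseq d n
  | AB.b => lpow (sseq d n) (d n - d 1) ++ sseq d (n - 1)

/-- The directive sequence of α = [0;2,\overline{r}] : d₁ = 1, dᵢ = r for i ≥ 2. -/
def dseq (r : ℕ) : ℕ → ℕ := fun i => if i ≤ 1 then 1 else r

/-- The directive sequence of 1 − α = [0;1,d₁,\overline{d₂,…,dₙ}] obtained from that of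
α = [0;1+d₁,\overline{d₂,…,dₙ}] : ê₁ = 0 and êᵢ = dᵢ₋₁ for i ≥ 2. -/
def dhat (d : ℕ → ℕ) : ℕ → ℕ := fun i => if i ≤ 1 then 0 else d (i - 1)

/-- `Generates ψ c x` : ψ is prolongable on the letter c and x = ψ^ω(c), i.e. every
ψ^m(c) is a prefix of x. -/
def Generates (ψ : AB → List AB) (c : AB) (x : ℕ → AB) : Prop :=
  (∃ w : List AB, w ≠ [] ∧ ψ c = c :: w) ∧ ∀ m, PrefInf (mpow ψ m c) x

/-- Fibonacci numbers, shifted: `fibw k = F_{k-1}`, so fibw 0 = F₋₁ = 1,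
fibw 1 = F₀ = 1, Fₙ = Fₙ₋₁ + Fₙ₋₂. -/
def fibw : ℕ → ℕ
  | 0 => 1
  | 1 => 1
  | n + 2 => fibw (n + 1) + fibw n

/-- `HasCF γ a` : γ has continued fraction expansion [0; a 1, a 2, a 3, …]. -/
def HasCF (γ : ℝ) (a : ℕ → ℕ) : Prop :=
  ∃ x : ℕ → ℝ, x 0 = γ ∧ (∀ i, 0 < x i ∧ x i < 1) ∧
    ∀ i, 1 / x i = (a (i + 1) : ℝ) + x (i + 1)

/-- γ has a continued fraction expansion of type (i):
γ = [0;1+d₁,\overline{d₂,…,dₙ}] < 1/2 with dₙ ≥ d₁ ≥ 1. -/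
def CFTypeI (γ : ℝ) : Prop :=
  ∃ a : ℕ → ℕ, HasCF γ a ∧ γ < 1 / 2 ∧
    ∃ n : ℕ, 2 ≤ n ∧ ∃ d : ℕ → ℕ,
      (∀ i, 1 ≤ i → 1 ≤ d i) ∧ a 1 = 1 + d 1 ∧ (∀ i, 2 ≤ i → a i = d i) ∧
      (∀ i, 2 ≤ i → d (i + (n - 1)) = d i) ∧ d 1 ≤ d n

/-- γ has a continued fraction expansion of type (ii):
γ = [0;1,d₁,\overline{d₂,…,dₙ}] > 1/2 with dₙ ≥ d₁. -/
def CFTypeII (γ : ℝ) : Prop :=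
  ∃ a : ℕ → ℕ, HasCF γ a ∧ 1 / 2 < γ ∧
    ∃ n : ℕ, 2 ≤ n ∧ ∃ d : ℕ → ℕ,
      (∀ i, 1 ≤ i → 1 ≤ d i) ∧ a 1 = 1 ∧ (∀ i, 2 ≤ i → a i = d (i - 1)) ∧
      (∀ i, 2 ≤ i → d (i + (n - 1)) = d i) ∧ d 1 ≤ d n

/-- A Sturm number: an irrational γ ∈ (0,1) whose continued fraction expansion is of
type (i) or type (ii). -/
def IsSturmNumber (γ : ℝ) : Prop :=
  Irrational γ ∧ 0 < γ ∧ γ < 1 ∧ (CFTypeI γ ∨ CFTypeII γ)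

/-! σ sends s₀ = a to sₙ₋₁, and s₁ = a^{d₁}b to sₙ₋₁^{d₁}·sₙ₋₁^{dₙ−d₁}sₙ₋₂ = sₙ. Being a morphism,
σ carries the recursion sₖ₊₁ = sₖ^{dₖ₊₁}sₖ₋₁ to σ(sₖ₊₁) = σ(sₖ)^{dₖ₊₁}σ(sₖ₋₁), which is the
recursion defining s_{k+n} because the directive sequence is (n−1)-periodic from index 2 on.
Iterating the shift by n − 1 gives the statement for σ^m. -/

lemma applyM_append (g : AB → List AB) (u v : List AB) :
    applyM g (u ++ v) = applyM g u ++ applyM g v :=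
  List.flatMap_append

lemma applyM_lpow (g : AB → List AB) (w : List AB) (k : ℕ) :
    applyM g (lpow w k) = lpow (applyM g w) k := by
  induction k with
  | zero => rfl
  | succ k ih => rw [lpow, applyM_append, ih, lpow]

lemma lpow_add (w : List AB) (i j : ℕ) : lpow w (i + j) = lpow w i ++ lpow w j := by
  induction i with
  | zero => simp [lpow]
  | succ i ih => rw [Nat.add_right_comm, lpow, ih, lpow, List.append_assoc]

lemma applyM_compM (g h : AB → List AB) (w : List AB) :
    applyM (compM g h) w = applyM g (applyM h w) := by
  simp only [applyM, List.flatMap_assoc]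
  rfl

lemma applyM_mpow_zero (g : AB → List AB) (w : List AB) : applyM (mpow g 0) w = w :=
  List.flatMap_singleton' w

lemma applyM_mpow_succ (g : AB → List AB) (m : ℕ) (w : List AB) :
    applyM (mpow g (m + 1)) w = applyM g (applyM (mpow g m) w) :=
  applyM_compM g (mpow g m) w

lemma applyM_mpow_of_shift {g : AB → List AB} {f : ℕ → List AB} {N : ℕ}
    (h : ∀ k, applyM g (f k) = f (k + N)) (m k : ℕ) :
    applyM (mpow g m) (f k) = f (k + m * N) := by
  induction m with
  | zero => simp [applyM_mpow_zero]
  | succ m ih => rw [applyM_mpow_succ, ih, h, add_one_mul, add_assoc]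

lemma applyM_sseq_of_shift {g : AB → List AB} {d : ℕ → ℕ} {N : ℕ}
    (hper : ∀ i, 2 ≤ i → d (i + N) = d i)
    (h₀ : applyM g (sseq d 1) = sseq d (1 + N)) (h₁ : applyM g (sseq d 2) = sseq d (2 + N)) :
    ∀ k, applyM g (sseq d (k + 1)) = sseq d (k + 1 + N) := by
  intro k
  induction k using Nat.twoStepInduction with
  | zero => exact h₀
  | one => exact h₁
  | more k ih₀ ih₁ =>
    have hsucc : k + 2 + 1 + N = (k + 1 + N) + 2 := by omega
    have hd : d (k + 1 + N + 1) = d (k + 2) := by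
      rw [← hper (k + 2) (by omega)]
      congr 1
      omega
    rw [sseq, applyM_append, applyM_lpow, ih₁, ih₀, hsucc, sseq, hd,
      show k + 1 + 1 + N = k + 1 + N + 1 by omega]

section sigmaGen

variable {d : ℕ → ℕ} {n : ℕ}

lemma applyM_sigmaGen_sseq_one (hn : 1 ≤ n) :
    applyM (sigmaGen d n) (sseq d 1) = sseq d (1 + (n - 1)) := by
  rw [Nat.add_sub_cancel' hn]
  simp [applyM, sseq, sigmaGen]

lemma applyM_sigmaGen_sseq_two (hn : 1 ≤ n) (hdn : d 1 ≤ d n) :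
    applyM (sigmaGen d n) (sseq d 2) = sseq d (2 + (n - 1)) := by
  obtain ⟨p, rfl⟩ : ∃ p, n = p + 1 := ⟨n - 1, by omega⟩
  have ha : applyM (sigmaGen d (p + 1)) (sseq d 1) = sseq d (p + 1) := by
    simp [applyM, sseq, sigmaGen]
  have hb : applyM (sigmaGen d (p + 1)) (sseq d 0) =
      lpow (sseq d (p + 1)) (d (p + 1) - d 1) ++ sseq d p := by
    simp [applyM, sseq, sigmaGen]
  calc applyM (sigmaGen d (p + 1)) (sseq d 2)
      = lpow (sseq d (p + 1)) (d 1) ++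
          (lpow (sseq d (p + 1)) (d (p + 1) - d 1) ++ sseq d p) := by
        rw [sseq, applyM_append, applyM_lpow, ha, hb]
    _ = lpow (sseq d (p + 1)) (d (p + 1)) ++ sseq d p := by
        rw [← List.append_assoc, ← lpow_add, Nat.add_sub_cancel' hdn]
    _ = sseq d (2 + (p + 1 - 1)) := by
        rw [show 2 + (p + 1 - 1) = p + 2 by omega]
        rfl

end sigmaGen

theorem statement5_general (n : ℕ) (hn : 2 ≤ n) (d : ℕ → ℕ)
    (hper : ∀ i, 2 ≤ i → d (i + (n - 1)) = d i)
    (hdn : d 1 ≤ d n) :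
    (∀ k : ℕ, applyM (sigmaGen d n) (sseq d (k + 1)) = sseq d (k + 1 + (n - 1))) ∧
    (∀ k m : ℕ, applyM (mpow (sigmaGen d n) m) (sseq d (k + 1)) =
      sseq d (k + 1 + m * (n - 1))) := by
  have hn₁ : 1 ≤ n := by omega
  have hσ := applyM_sseq_of_shift hper (applyM_sigmaGen_sseq_one hn₁)
    (applyM_sigmaGen_sseq_two hn₁ hdn)
  refine ⟨hσ, fun k m => ?_⟩
  have hiter := applyM_mpow_of_shift (g := sigmaGen d n) (f := fun j => sseq d (j + 1))
    (N := n - 1) (fun j => by simpa only [Nat.add_right_comm] using hσ j) m k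
  simpa only [Nat.add_right_comm] using hiter

/-- For a type (i) Sturm number α = [0;1+d₁,\overline{d₂,…,dₙ}]
(dₙ ≥ d₁ ≥ 1), σ(sₖ) = s_{k+(n−1)} for all k ∈ ℕ, and consequently
σ^m(sₖ) = s_{k+m(n−1)} for all m ≥ 0. (Recall `sseq d (k+1)` is sₖ.) -/
theorem statement5 (n : ℕ) (hn : 2 ≤ n) (d : ℕ → ℕ)
    (hd : ∀ i, 1 ≤ i → 1 ≤ d i)
    (hper : ∀ i, 2 ≤ i → d (i + (n - 1)) = d i)
    (hdn : d 1 ≤ d n) :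
    (∀ k : ℕ, applyM (sigmaGen d n) (sseq d (k + 1)) = sseq d (k + 1 + (n - 1))) ∧
    (∀ k m : ℕ, applyM (mpow (sigmaGen d n) m) (sseq d (k + 1)) =
      sseq d (k + 1 + m * (n - 1))) :=
  statement5_general n hn d hper hdn
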